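/- Let λ ⊢ n lie in the hook H(k,l) (i.e., λ_{k+1} ≤ l), and let T_λ be a Young tableau of shape λ. Then there exists an element u·e_{T_λ} ∈ F[S_n]·e_{T_λ} and a partition of {1,…,n} into disjoint sets X₁,…,X_{k'}, Y₁,…,Y_{l'} with k' ≤ k, l' ≤ l, such that σ·(u e_{T_λ}) = u e_{T_λ} for every permutation σ of any set X_i, σ·(u e_{T_λ}) = (−1)^σ u e_{T_λ} for every permutation σ of any set Y_j, and F[S_n]·(u e_{T_λ}) = F[S_n]·e_{T_λ}; moreover k', l' and the cardinalities |X_i|, |Y_j| depend only on λ. -/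

import Mathlib

variable (F : Type*) [Field F] [CharZero F]

/-- The Young symmetrizer `e_{T_λ}` of the tableau with row function `row` and column
function `col`. -/
noncomputable def youngSym {n : ℕ} (row col : Fin n → ℕ) :
    MonoidAlgebra F (Equiv.Perm (Fin n)) :=
  ∑ σ : Equiv.Perm (Fin n), ∑ τ : Equiv.Perm (Fin n),
    if (∀ j, row (σ j) = row j) ∧ (∀ j, col (τ j) = col j) then
      (Equiv.Perm.sign τ : ℤ) • MonoidAlgebra.single (σ * τ) (1 : F)
    else 0

/-!
Take for `X_i` the `i`-th row (`i < k`) and for `Y_c` the part of column `c` below row `k`;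
these columns have index `c < λ_k ≤ l`. Write `e = a b` with `a` the row symmetrizer and `b` the
column antisymmetrizer, and let `u` be the antisymmetrizer of the column permutations supported
on the `Y_c`. A permutation of some `X_i` commutes with `u` (disjoint supports) and is absorbed
by `a`; a permutation of some `Y_c` lies in the group of `u` and is absorbed with its sign.

Since `b u = |U| b`, we get `e (u e) = |U| e e = |U| θ e`. By von Neumann's lemma, `e x e ∈ F e`
for every `x`, so `e e = θ e`, and `θ ≠ 0` because the trace of right multiplication by `e` is
`n! ≠ 0`. Hence `e` lies in the left ideal generated by `u e`.
-/

section HookGenerator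

open Finset Function Equiv MonoidAlgebra

namespace Finset

theorem sum_range_card_le_sum (s : Finset ℕ) : ∑ i ∈ range #s, i ≤ ∑ x ∈ s, x := by
  induction s using Finset.induction_on_max with
  | empty => simp
  | insert a s hlt ih =>
    have has : a ∉ s := fun h => (hlt a h).false
    have hcard : #s ≤ a := by simpa using card_le_card fun x hx => mem_range.2 (hlt x hx)
    rw [card_insert_of_notMem has, sum_range_succ, sum_insert has]
    omega

theorem eq_range_card_of_sum_le {s : Finset ℕ} (h : ∑ x ∈ s, x ≤ ∑ i ∈ range #s, i) :
    s = range #s := by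
  induction s using Finset.induction_on_max with
  | empty => simp
  | insert a s hlt ih =>
    have has : a ∉ s := fun h => (hlt a h).false
    have hcard : #s ≤ a := by simpa using card_le_card fun x hx => mem_range.2 (hlt x hx)
    have hs := sum_range_card_le_sum s
    rw [card_insert_of_notMem has, sum_range_succ, sum_insert has] at h
    rw [card_insert_of_notMem has, show a = #s by omega, range_add_one, ← ih (by omega)]

end Finset

section PermsPreserving

variable {α β : Type*} {f : α → β} {σ : Perm α}

def permsPreserving (f : α → β) : Subgroup (Perm α) where
  carrier := {σ | ∀ a, f (σ a) = f a}
  one_mem' _ := rfl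
  mul_mem' hσ hτ a := (hσ _).trans (hτ a)
  inv_mem' {σ} hσ a := by simpa using (hσ (σ⁻¹ a)).symm

theorem mem_permsPreserving : σ ∈ permsPreserving f ↔ ∀ a, f (σ a) = f a := Iff.rfl

theorem swap_mem_permsPreserving [DecidableEq α] {i j : α} (h : f i = f j) :
    swap i j ∈ permsPreserving f := fun a => by
  rcases eq_or_ne a i with rfl | hi
  · simp [h]
  rcases eq_or_ne a j with rfl | hj
  · simp [h]
  · rw [swap_apply_of_ne_of_ne hi hj]

theorem mem_permsPreserving_of_forall_notMem {X : Set α}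
    (hX : ∀ j ∈ X, ∀ j' ∈ X, f j = f j') (hσ : ∀ j ∉ X, σ j = j) :
    σ ∈ permsPreserving f := fun a => by
  by_cases ha : a ∈ X
  · refine hX _ ?_ _ ha
    by_contra hσa
    rw [σ.injective (hσ _ hσa)] at hσa
    exact hσa ha
  · rw [hσ a ha]

theorem eq_one_of_mem_permsPreserving {row col : α → ℕ}
    (hinj : Injective fun j => (row j, col j)) (hrow : σ ∈ permsPreserving row)
    (hcol : σ ∈ permsPreserving col) : σ = 1 :=
  Equiv.ext fun j => hinj (Prod.ext (hrow j) (hcol j))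

end PermsPreserving

section Tableau

variable {ι : Type*} [Fintype ι] {row row' col : ι → ℕ}

def rowCols (row col : ι → ℕ) (r : ℕ) : Finset ℕ := ({j | row j = r} : Finset ι).image col

def IsLeftJustified (row col : ι → ℕ) : Prop := ∀ r, ∃ m, rowCols row col r = range m

theorem injOn_col_rowFiber (hinj : Injective fun j => (row j, col j)) (r : ℕ) :
    Set.InjOn col ({j | row j = r} : Finset ι) := by
  intro a ha b hb hab
  simp only [coe_filter, mem_univ, true_and, Set.mem_ofPred_eq] at ha hb
  exact hinj (Prod.ext (ha.trans hb.symm) hab)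

theorem card_rowCols (hinj : Injective fun j => (row j, col j)) (r : ℕ) :
    #(rowCols row col r) = #({j | row j = r} : Finset ι) :=
  card_image_of_injOn (injOn_col_rowFiber hinj r)

theorem sum_sum_rowCols (hinj : Injective fun j => (row j, col j)) {R : Finset ℕ}
    (hR : ∀ j, row j ∈ R) : ∑ r ∈ R, ∑ c ∈ rowCols row col r, c = ∑ j, col j := by
  simp only [rowCols, sum_image (injOn_col_rowFiber hinj _)]
  exact sum_fiberwise_of_maps_to (fun j _ => hR j) col

theorem rowCols_eq_empty {r : ℕ} (hr : ∀ j, row j ≠ r) : rowCols row col r = ∅ := by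
  simp [rowCols, hr]

/-- Both fillings have column sum `∑ j, col j`, and with the row lengths fixed, the
left-justified filling is the unique one minimizing the sum of the column indices. -/
theorem rowCols_eq_of_card_rowFiber_eq (hinj : Injective fun j => (row j, col j))
    (hinj' : Injective fun j => (row' j, col j)) (hleft : IsLeftJustified row col)
    (hcard : ∀ r, #({j | row' j = r} : Finset ι) = #({j | row j = r} : Finset ι)) (r : ℕ) :
    rowCols row' col r = rowCols row col r := by
  classical
  set R := univ.image row ∪ univ.image row'
  have hrange : ∀ r, rowCols row col r = range #(rowCols row' col r) := fun r => by
    obtain ⟨m, hm⟩ := hleft r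
    rw [card_rowCols hinj', hcard, ← card_rowCols hinj, hm, card_range]
  have hle : ∀ r ∈ R, ∑ c ∈ rowCols row col r, c ≤ ∑ c ∈ rowCols row' col r, c := fun r _ => by
    rw [hrange]
    exact sum_range_card_le_sum _
  have htot : ∑ r ∈ R, ∑ c ∈ rowCols row col r, c = ∑ r ∈ R, ∑ c ∈ rowCols row' col r, c := by
    rw [sum_sum_rowCols hinj, sum_sum_rowCols hinj'] <;> simp [R]
  by_cases hr : r ∈ R
  · rw [hrange r]
    apply eq_range_card_of_sum_le
    rw [← hrange, (sum_eq_sum_iff_of_le hle).1 htot r hr]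
  · simp only [R, mem_union, mem_image, mem_univ, true_and, not_or, not_exists] at hr
    rw [rowCols_eq_empty hr.2, rowCols_eq_empty hr.1]

theorem exists_cell_of_injective_comp (hinj : Injective fun j => (row j, col j))
    (hleft : IsLeftJustified row col) (π : Perm ι)
    (H : Injective fun j => (row (π j), col j)) (j : ι) :
    ∃ j', row j' = row (π j) ∧ col j' = col j := by
  have hcard : ∀ r, #({j | row (π j) = r} : Finset ι) = #({j | row j = r} : Finset ι) :=
    fun r => card_equiv π (by simp)
  have hmem : col j ∈ rowCols (fun j => row (π j)) col (row (π j)) :=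
    mem_image_of_mem _ (by simp)
  rw [rowCols_eq_of_card_rowFiber_eq hinj H hleft hcard] at hmem
  simpa [rowCols] using hmem

theorem exists_mul_eq_or_exists_col_eq (hinj : Injective fun j => (row j, col j))
    (hleft : IsLeftJustified row col) (π : Perm ι) :
    (∃ ρ ∈ permsPreserving row, ∃ τ ∈ permsPreserving col, π = ρ * τ) ∨
      ∃ i j, i ≠ j ∧ row i = row j ∧ col (π⁻¹ i) = col (π⁻¹ j) := by
  by_cases H : Injective fun j => (row (π j), col j)
  · choose m hm using exists_cell_of_injective_comp hinj hleft π H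
    have hm_inj : Injective m := fun a b hab =>
      H (Prod.ext ((hm a).1.symm.trans (hab ▸ (hm b).1)) ((hm a).2.symm.trans (hab ▸ (hm b).2)))
    let τ := Equiv.ofBijective m (Finite.injective_iff_bijective.1 hm_inj)
    refine .inl ⟨π * τ⁻¹, fun a => ?_, τ, fun a => (hm a).2, by simp⟩
    simpa using (hm (τ⁻¹ a)).1.symm.trans (congrArg row (τ.apply_symm_apply a))
  · obtain ⟨a, b, hab, hne⟩ := not_injective_iff.1 H
    exact .inr ⟨π a, π b, π.injective.ne hne, congrArg Prod.fst hab,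
      by simpa using congrArg Prod.snd hab⟩

end Tableau

section Shape

variable {n : ℕ} {lam : ℕ → ℕ} {row col : Fin n → ℕ}

theorem rowCols_eq_range_of_apply_eq_zero (hpart : Antitone lam)
    (hsum : ∑ i ∈ range n, lam i = n) (hzero : lam n = 0) (hcol : ∀ j, col j < lam (row j))
    (hinj : Injective fun j => (row j, col j)) (r : ℕ) :
    rowCols row col r = range (lam r) := by
  have hrow : ∀ j, row j < n := fun j => by
    by_contra! h
    have := hpart h
    have := hcol j
    omega
  have hsub : ∀ r, rowCols row col r ⊆ range (lam r) := fun r c hc => by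
    obtain ⟨j, hj, rfl⟩ := mem_image.1 hc
    exact mem_range.2 ((mem_filter.1 hj).2 ▸ hcol j)
  have hle : ∀ r ∈ range n, #(rowCols row col r) ≤ lam r := fun r _ => by
    simpa using card_le_card (hsub r)
  have htot : ∑ r ∈ range n, #(rowCols row col r) = ∑ r ∈ range n, lam r := by
    simp only [card_rowCols hinj, hsum]
    rw [← card_eq_sum_card_fiberwise fun j _ => mem_range.2 (hrow j), card_univ, Fintype.card_fin]
  refine eq_of_subset_of_card_le (hsub r) ?_
  rcases lt_or_ge r n with hr | hr
  · simpa using ((sum_eq_sum_iff_of_le hle).1 htot r (mem_range.2 hr)).ge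
  · simp [show lam r = 0 by have := hpart hr; omega]

theorem col_eq_zero_of_apply_ne_zero (hpart : Antitone lam)
    (hsum : ∑ i ∈ range n, lam i = n) (hzero : lam n ≠ 0) (hcol : ∀ j, col j < lam (row j))
    (j : Fin n) : col j = 0 := by
  obtain ⟨m, rfl⟩ : ∃ m, n = m + 1 := Nat.exists_eq_add_one_of_ne_zero j.pos.ne'
  have hone : ∀ i ∈ range m, 1 ≤ lam (i + 1) := fun i hi =>
    (Nat.one_le_iff_ne_zero.2 hzero).trans (hpart (by rw [mem_range] at hi; omega))
  have hlam0 : lam 0 ≤ 1 := by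
    have := sum_le_sum hone
    rw [sum_range_succ'] at hsum
    simp only [sum_const, card_range, smul_eq_mul, mul_one] at this
    omega
  have := hcol j
  have := hpart (Nat.zero_le (row j))
  omega

theorem isLeftJustified_of_shape (hpart : Antitone lam)
    (hsum : ∑ i ∈ range n, lam i = n) (hcol : ∀ j, col j < lam (row j))
    (hinj : Injective fun j => (row j, col j)) : IsLeftJustified row col := by
  by_cases hzero : lam n = 0
  · exact fun r => ⟨lam r, rowCols_eq_range_of_apply_eq_zero hpart hsum hzero hcol hinj r⟩
  · obtain rfl : col = fun _ => 0 := funext (col_eq_zero_of_apply_ne_zero hpart hsum hzero hcol)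
    intro r
    rcases ({j | row j = r} : Finset (Fin n)).eq_empty_or_nonempty with h | h
    · exact ⟨0, by simp [rowCols, h]⟩
    · exact ⟨1, by simp [rowCols, image_const h]⟩

end Shape

section Symmetrizer

variable (R : Type*) [Ring R] {α : Type*} [Fintype α] [DecidableEq α]

open Classical in
noncomputable def symmetrizer (S : Subgroup (Perm α)) : MonoidAlgebra R (Perm α) :=
  ∑ σ : S, single (σ : Perm α) 1

open Classical in
noncomputable def antisymmetrizer (S : Subgroup (Perm α)) : MonoidAlgebra R (Perm α) :=
  ∑ σ : S, (Perm.sign (σ : Perm α) : ℤ) • single (σ : Perm α) 1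

variable {R} {S T : Subgroup (Perm α)} {σ : Perm α}

theorem single_mul_symmetrizer (hσ : σ ∈ S) :
    single σ (1 : R) * symmetrizer R S = symmetrizer R S := by
  classical
  rw [symmetrizer, mul_sum]
  exact Fintype.sum_equiv (Equiv.mulLeft ⟨σ, hσ⟩) _ _ fun τ => by simp [single_mul_single]

theorem symmetrizer_mul_single (hσ : σ ∈ S) :
    symmetrizer R S * single σ (1 : R) = symmetrizer R S := by
  classical
  rw [symmetrizer, sum_mul]
  exact Fintype.sum_equiv (Equiv.mulRight ⟨σ, hσ⟩) _ _ fun τ => by simp [single_mul_single]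

theorem single_mul_antisymmetrizer (hσ : σ ∈ S) :
    single σ (1 : R) * antisymmetrizer R S = (Perm.sign σ : ℤ) • antisymmetrizer R S := by
  classical
  rw [antisymmetrizer, mul_sum, smul_sum]
  refine Fintype.sum_equiv (Equiv.mulLeft ⟨σ, hσ⟩) _ _ fun τ => ?_
  rw [mul_smul_comm, single_mul_single, one_mul, smul_smul, ← Units.val_mul]
  simp only [coe_mulLeft, Subgroup.coe_mul, Perm.sign_mul, ← mul_assoc, Int.units_mul_self,
    one_mul]

theorem antisymmetrizer_mul_single (hσ : σ ∈ S) :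
    antisymmetrizer R S * single σ (1 : R) = (Perm.sign σ : ℤ) • antisymmetrizer R S := by
  classical
  rw [antisymmetrizer, sum_mul, smul_sum]
  refine Fintype.sum_equiv (Equiv.mulRight ⟨σ, hσ⟩) _ _ fun τ => ?_
  rw [smul_mul_assoc, single_mul_single, one_mul, smul_smul, ← Units.val_mul]
  simp only [coe_mulRight, Subgroup.coe_mul, Perm.sign_mul, mul_comm _ (Perm.sign σ),
    ← mul_assoc, Int.units_mul_self, one_mul]

theorem antisymmetrizer_mul_antisymmetrizer_of_le (hTS : T ≤ S) :
    antisymmetrizer R S * antisymmetrizer R T = Nat.card T • antisymmetrizer R S := by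
  classical
  rw [antisymmetrizer.eq_1 R T, mul_sum, Nat.card_eq_fintype_card, ← card_univ, ← sum_const]
  refine sum_congr rfl fun τ _ => ?_
  rw [mul_smul_comm, antisymmetrizer_mul_single (hTS τ.2), smul_smul, ← Units.val_mul,
    Int.units_mul_self, Units.val_one, one_smul]

theorem commute_single_antisymmetrizer (h : ∀ τ ∈ S, Commute σ τ) :
    Commute (single σ (1 : R)) (antisymmetrizer R S) := by
  classical
  exact Commute.sum_right _ _ _ fun τ _ =>
    (single_commute_single (h τ τ.2) (Commute.one_left 1)).smul_right _

end Symmetrizer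

theorem trace_mulRight {K G : Type*} [Field K] [Group G] [Fintype G] (x : MonoidAlgebra K G) :
    LinearMap.trace K _ (LinearMap.mulRight K x) = Fintype.card G * x.coeff 1 := by
  classical
  rw [LinearMap.trace_eq_matrix_trace K (MonoidAlgebra.basis G K), Matrix.trace]
  have hdiag : ∀ g : G, (basis G K).repr (single g 1 * x) g = x.coeff 1 := fun g => by
    change (single g 1 * x).coeff g = _
    rw [coeff_single_mul_apply, inv_mul_cancel, one_mul]
  simp [LinearMap.toMatrix_apply, hdiag]

section YoungSymmetrizer

variable {K : Type*} [Field K] {n : ℕ} {row col : Fin n → ℕ}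

theorem youngSym_eq_symmetrizer_mul_antisymmetrizer :
    youngSym K row col =
      symmetrizer K (permsPreserving row) * antisymmetrizer K (permsPreserving col) := by
  classical
  have hsub : ∀ (S : Subgroup (Perm (Fin n))) (f : Perm (Fin n) → MonoidAlgebra K (Perm (Fin n))),
      ∑ σ : S, f σ = ∑ σ with σ ∈ S, f σ := fun S f => (sum_subtype _ (by simp) f).symm
  rw [symmetrizer, antisymmetrizer, hsub _ (fun σ => single σ 1),
    hsub _ (fun σ => (Perm.sign σ : ℤ) • single σ 1), sum_mul_sum, youngSym]
  simp only [sum_filter, ite_and, ← mem_permsPreserving, mul_smul_comm, single_mul_single,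
    one_mul, sum_ite_irrel, sum_const_zero]

theorem coeff_one_youngSym (hinj : Injective fun j => (row j, col j)) :
    (youngSym K row col).coeff 1 = 1 := by
  classical
  have hterm : ∀ σ τ : Perm (Fin n),
      (if (∀ j, row (σ j) = row j) ∧ (∀ j, col (τ j) = col j) then
        (Perm.sign τ : ℤ) • single (σ * τ) (1 : K) else 0).coeff 1 =
      if σ = 1 ∧ τ = 1 then 1 else 0 := by
    intro σ τ
    by_cases h1 : σ = 1 ∧ τ = 1
    · simp [h1]
    rw [if_neg h1]
    split_ifs with hc
    · suffices σ * τ ≠ 1 by simp [coeff_single, this]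
      intro h
      obtain rfl := eq_inv_of_mul_eq_one_right h
      have hσ : σ ∈ permsPreserving col := by
        simpa using inv_mem (show σ⁻¹ ∈ permsPreserving col from hc.2)
      simp_all [eq_one_of_mem_permsPreserving hinj hc.1 hσ]
    · rfl
  simp only [youngSym, coeff_sum, Finset.sum_apply', hterm]
  simp [ite_and]

theorem single_mul_youngSym {σ : Perm (Fin n)} (hσ : σ ∈ permsPreserving row) :
    single σ 1 * youngSym K row col = youngSym K row col := by
  rw [youngSym_eq_symmetrizer_mul_antisymmetrizer, ← mul_assoc, single_mul_symmetrizer hσ]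

theorem youngSym_mul_antisymmetrizer {T : Subgroup (Perm (Fin n))}
    (hT : T ≤ permsPreserving col) :
    youngSym K row col * antisymmetrizer K T = Nat.card T • youngSym K row col := by
  rw [youngSym_eq_symmetrizer_mul_antisymmetrizer, mul_assoc,
    antisymmetrizer_mul_antisymmetrizer_of_le hT, mul_smul_comm]

theorem single_mul_antisymmetrizer_mul_youngSym {X Y : Set (Fin n)} (hXY : Disjoint X Y)
    {T : Subgroup (Perm (Fin n))} (hT : T ≤ fixingSubgroup (Perm (Fin n)) Yᶜ)
    {σ : Perm (Fin n)} (hσrow : σ ∈ permsPreserving row) (hσ : ∀ j ∉ X, σ j = j) :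
    single σ 1 * (antisymmetrizer K T * youngSym K row col) =
      antisymmetrizer K T * youngSym K row col := by
  have hcomm : ∀ τ ∈ T, Commute σ τ := fun τ hτ => Perm.Disjoint.commute fun j => by
    by_cases hj : j ∈ X
    · exact .inr ((mem_fixingSubgroup_iff _).1 (hT hτ) j (hXY.notMem_of_mem_left hj))
    · exact .inl (hσ j hj)
  rw [← mul_assoc, (commute_single_antisymmetrizer hcomm).eq, mul_assoc,
    single_mul_youngSym hσrow]

end YoungSymmetrizer

section QuasiIdempotent

variable {n : ℕ} {row col : Fin n → ℕ}

/-- `t` is absorbed on the left and its conjugate `π⁻¹ t π` on the right with sign `-1`, so the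
product equals its own negative. -/
theorem symmetrizer_mul_single_mul_antisymmetrizer_eq_zero {α : Type*} [Fintype α]
    [DecidableEq α] {S T : Subgroup (Perm α)} {π t : Perm α} (ht : t ∈ S)
    (htπ : π⁻¹ * t * π ∈ T) (hsign : Perm.sign t = -1) :
    symmetrizer F S * single π 1 * antisymmetrizer F T = 0 := by
  set x := symmetrizer F S * single π 1 * antisymmetrizer F T
  have hconj : single t (1 : F) * single π 1 = single π 1 * single (π⁻¹ * t * π) 1 := by
    simp only [single_mul_single, mul_one, ← mul_assoc, mul_inv_cancel, one_mul]
  have hneg : x = -x := calc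
    x = symmetrizer F S * (single t 1 * single π 1) * antisymmetrizer F T := by
      rw [← mul_assoc, symmetrizer_mul_single ht]
    _ = (Perm.sign (π⁻¹ * t * π) : ℤ) • x := by
      rw [hconj, ← mul_assoc, mul_assoc _ (single _ _), single_mul_antisymmetrizer htπ,
        mul_smul_comm]
    _ = -x := by simp [Perm.sign_mul, hsign]
  have h2 : (2 : F) • x = 0 := by
    rw [two_smul]
    nth_rewrite 1 [hneg]
    exact neg_add_cancel x
  exact (smul_eq_zero.1 h2).resolve_left two_ne_zero

theorem youngSym_mul_mul_youngSym_mem_span (hinj : Injective fun j => (row j, col j))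
    (hleft : IsLeftJustified row col) (x : MonoidAlgebra F (Perm (Fin n))) :
    youngSym F row col * x * youngSym F row col ∈ F ∙ youngSym F row col := by
  set a := symmetrizer F (permsPreserving row)
  set b := antisymmetrizer F (permsPreserving col)
  have he : youngSym F row col = a * b := youngSym_eq_symmetrizer_mul_antisymmetrizer
  have hsingle : ∀ π : Perm (Fin n), a * single π 1 * b ∈ F ∙ youngSym F row col := fun π => by
    rcases exists_mul_eq_or_exists_col_eq hinj hleft π with
      ⟨ρ, hρ, τ, hτ, rfl⟩ | ⟨i, j, hij, hrow, hcol⟩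
    · have : a * single (ρ * τ) 1 * b = (Perm.sign τ : ℤ) • youngSym F row col := by
        rw [← one_mul (1 : F), ← single_mul_single, ← mul_assoc, mul_assoc _ _ b,
          symmetrizer_mul_single hρ, single_mul_antisymmetrizer hτ, mul_smul_comm, he]
      rw [this]
      exact zsmul_mem (Submodule.mem_span_singleton_self _) _
    · have hconj : π⁻¹ * swap i j * π = swap (π⁻¹ i) (π⁻¹ j) := by
        rw [swap_apply_apply, inv_inv]
      rw [symmetrizer_mul_single_mul_antisymmetrizer_eq_zero F (swap_mem_permsPreserving hrow)
        (hconj ▸ swap_mem_permsPreserving hcol) (Perm.sign_swap hij)]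
      exact Submodule.zero_mem _
  have hmid : ∀ y, a * y * b ∈ F ∙ youngSym F row col := fun y => by
    induction y using MonoidAlgebra.induction_on with
    | of π => simpa using hsingle π
    | add y z hy hz => simpa [mul_add, add_mul] using add_mem hy hz
    | smul r y hy => simpa using Submodule.smul_mem _ r hy
  simpa [he, mul_assoc] using hmid (b * x * a)

/-- If `θ = 0`, right multiplication by `e` would be nilpotent, but its trace is
`n! · e(1) = n!`. -/
theorem exists_youngSym_mul_self (hinj : Injective fun j => (row j, col j))
    (hleft : IsLeftJustified row col) :
    ∃ θ : F, θ ≠ 0 ∧ youngSym F row col * youngSym F row col = θ • youngSym F row col := by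
  obtain ⟨θ, hθ⟩ := Submodule.mem_span_singleton.1
    (by simpa using youngSym_mul_mul_youngSym_mem_span F hinj hleft 1)
  refine ⟨θ, fun h0 => ?_, hθ.symm⟩
  have hnil : IsNilpotent (LinearMap.mulRight F (youngSym F row col)) := by
    refine ⟨2, ?_⟩
    rw [pow_two, Module.End.mul_eq_comp, ← LinearMap.mulRight_mul, ← hθ, h0, zero_smul]
    ext
    simp
  have htr := (LinearMap.isNilpotent_trace_of_isNilpotent hnil).eq_zero
  rw [trace_mulRight, coeff_one_youngSym hinj, mul_one] at htr
  exact Fintype.card_ne_zero (Nat.cast_eq_zero.1 htr)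

theorem range_mul_antisymmetrizer_mul_youngSym (hinj : Injective fun j => (row j, col j))
    (hleft : IsLeftJustified row col) {T : Subgroup (Perm (Fin n))}
    (hT : T ≤ permsPreserving col) :
    Set.range (fun y => y * (antisymmetrizer F T * youngSym F row col)) =
      Set.range (fun y => y * youngSym F row col) := by
  obtain ⟨θ, hθ, he⟩ := exists_youngSym_mul_self F hinj hleft
  have hc : (Nat.card T * θ : F) ≠ 0 := mul_ne_zero (Nat.cast_ne_zero.2 Nat.card_pos.ne') hθ
  have hgen : youngSym F row col * (antisymmetrizer F T * youngSym F row col) =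
      (Nat.card T * θ : F) • youngSym F row col := by
    rw [← mul_assoc, youngSym_mul_antisymmetrizer hT, smul_mul_assoc, he,
      ← Nat.cast_smul_eq_nsmul F, smul_smul]
  ext z
  constructor
  · rintro ⟨y, rfl⟩
    exact ⟨y * antisymmetrizer F T, by simp only [mul_assoc]⟩
  · rintro ⟨y, rfl⟩
    refine ⟨(Nat.card T * θ : F)⁻¹ • (y * youngSym F row col), ?_⟩
    simp only [smul_mul_assoc, mul_assoc, hgen, mul_smul_comm, smul_smul, inv_mul_cancel₀ hc,
      one_smul]

end QuasiIdempotent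

structure IsRowColPartition {ι : Type*} (row col : ι → ℕ) {k' l' : ℕ} (Xs : Fin k' → Finset ι)
    (Ys : Fin l' → Finset ι) : Prop where
  existsUnique : ∀ j, ∃! s, j ∈ Sum.elim Xs Ys s
  row_eq : ∀ i, ∀ j ∈ Xs i, ∀ j' ∈ Xs i, row j = row j'
  col_eq : ∀ i, ∀ j ∈ Ys i, ∀ j' ∈ Ys i, col j = col j'

theorem IsRowColPartition.disjoint {ι : Type*} {row col : ι → ℕ} {k' l' : ℕ}
    {Xs : Fin k' → Finset ι} {Ys : Fin l' → Finset ι} (hP : IsRowColPartition row col Xs Ys)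
    (i : Fin k') (i' : Fin l') : Disjoint (Xs i) (Ys i') :=
  disjoint_left.2 fun j hX hY => Sum.inl_ne_inr ((hP.existsUnique j).unique hX hY)

theorem exists_symmetric_alternating_generator {n k' l' : ℕ} {row col : Fin n → ℕ}
    (hinj : Injective fun j => (row j, col j)) (hleft : IsLeftJustified row col)
    {Xs : Fin k' → Finset (Fin n)} {Ys : Fin l' → Finset (Fin n)}
    (hP : IsRowColPartition row col Xs Ys) :
    ∃ u : MonoidAlgebra F (Perm (Fin n)),
      (∀ (i : Fin k') (σ : Perm (Fin n)), (∀ j, j ∉ Xs i → σ j = j) →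
        single σ 1 * (u * youngSym F row col) = u * youngSym F row col) ∧
      (∀ (i : Fin l') (σ : Perm (Fin n)), (∀ j, j ∉ Ys i → σ j = j) →
        single σ 1 * (u * youngSym F row col) = (Perm.sign σ : ℤ) • (u * youngSym F row col)) ∧
      Set.range (fun y => y * (u * youngSym F row col)) =
        Set.range (fun y => y * youngSym F row col) := by
  set Y : Set (Fin n) := {j | ∃ i, j ∈ Ys i}
  set T := permsPreserving col ⊓ fixingSubgroup (Perm (Fin n)) Yᶜ
  refine ⟨antisymmetrizer F T, fun i σ hσ => ?_, fun i σ hσ => ?_,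
    range_mul_antisymmetrizer_mul_youngSym F hinj hleft inf_le_left⟩
  · have hXY : Disjoint (Xs i : Set (Fin n)) Y :=
      Set.disjoint_left.2 fun j hX ⟨i', hY⟩ => disjoint_left.1 (hP.disjoint i i') hX hY
    exact single_mul_antisymmetrizer_mul_youngSym hXY inf_le_right
      (mem_permsPreserving_of_forall_notMem (hP.row_eq i) hσ) hσ
  · have hσT : σ ∈ T := ⟨mem_permsPreserving_of_forall_notMem (hP.col_eq i) hσ,
      (mem_fixingSubgroup_iff _).2 fun j hj => hσ j fun hYj => hj ⟨i, hYj⟩⟩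
    rw [← mul_assoc, single_mul_antisymmetrizer hσT, smul_mul_assoc]

section Partition

variable {n : ℕ} {row col : Fin n → ℕ}

theorem isRowColPartition_rowFiber {ι : Type*} [Fintype ι] {row col : ι → ℕ} {k l : ℕ}
    (hcol : ∀ j, k ≤ row j → col j < l) :
    IsRowColPartition row col (fun i : Fin k => ({j | row j = i} : Finset ι))
      (fun c : Fin l => {j | col j = c ∧ k ≤ row j}) where
  existsUnique j := by
    by_cases hj : row j < k
    · refine ⟨.inl ⟨row j, hj⟩, by simp, ?_⟩
      rintro (i | c) hs <;> simp at hs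
      · simp [hs]
      · omega
    · refine ⟨.inr ⟨col j, hcol j (by omega)⟩, by simp; omega, ?_⟩
      rintro (i | c) hs <;> simp at hs
      · omega
      · simp [hs]
  row_eq i j hj j' hj' := by simp_all
  col_eq c j hj j' hj' := by simp_all

theorem isRowColPartition_singleton (row col : Fin n → ℕ) :
    IsRowColPartition row col (fun i : Fin n => {i}) (Fin.elim0 : Fin 0 → Finset (Fin n)) where
  existsUnique j := by
    refine ⟨.inl j, by simp, ?_⟩
    rintro (i | c) hs
    · simp_all
    · exact c.elim0
  row_eq i j hj j' hj' := by simp_all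
  col_eq c := c.elim0

theorem isRowColPartition_univ (hcol : ∀ j j', col j = col j') :
    IsRowColPartition row col (Fin.elim0 : Fin 0 → Finset (Fin n)) (fun _ : Fin 1 => univ) where
  existsUnique j := by
    refine ⟨.inr 0, by simp, ?_⟩
    rintro (i | c) hs
    · exact i.elim0
    · simp [Fin.fin_one_eq_zero c]
  row_eq i := i.elim0
  col_eq _ j _ j' _ := hcol j j'

variable {lam : ℕ → ℕ}

theorem card_rowFiber_of_apply_eq_zero (hpart : Antitone lam)
    (hsum : ∑ i ∈ range n, lam i = n) (hzero : lam n = 0) (hcol : ∀ j, col j < lam (row j))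
    (hinj : Injective fun j => (row j, col j)) (r : ℕ) :
    #({j | row j = r} : Finset (Fin n)) = lam r := by
  rw [← card_rowCols hinj, rowCols_eq_range_of_apply_eq_zero hpart hsum hzero hcol hinj,
    card_range]

theorem card_colFiber_of_apply_eq_zero (hpart : Antitone lam)
    (hsum : ∑ i ∈ range n, lam i = n) (hzero : lam n = 0) (hcol : ∀ j, col j < lam (row j))
    (hinj : Injective fun j => (row j, col j)) (k c : ℕ) :
    #({j | col j = c ∧ k ≤ row j} : Finset (Fin n)) = #{r ∈ range n | k ≤ r ∧ c < lam r} := by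
  have hcell : ∀ r, (∃ j, row j = r ∧ col j = c) ↔ c < lam r := fun r => by
    rw [← mem_range, ← rowCols_eq_range_of_apply_eq_zero hpart hsum hzero hcol hinj]
    simp [rowCols]
  have hlt : ∀ r, c < lam r → r < n := fun r hr => by
    by_contra! h
    have := hpart h
    omega
  refine card_bij (fun j _ => row j) (fun j hj => ?_) (fun j₁ hj₁ j₂ hj₂ h => ?_) (fun r hr => ?_)
  · simp only [mem_filter, mem_univ, true_and] at hj ⊢
    exact ⟨mem_range.2 (hlt _ (hj.1 ▸ hcol j)), hj.2, hj.1 ▸ hcol j⟩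
  · simp only [mem_filter, mem_univ, true_and] at hj₁ hj₂
    exact hinj (Prod.ext h (hj₁.1.trans hj₂.1.symm))
  · simp only [mem_filter, mem_range] at hr
    obtain ⟨j, rfl, hj⟩ := (hcell r).2 hr.2.2
    exact ⟨j, by simp [hj, hr.2.1], rfl⟩

theorem exists_isRowColPartition {k l : ℕ} (hpart : Antitone lam)
    (hsum : ∑ i ∈ range n, lam i = n) (hhook : lam k ≤ l) :
    ∃ (k' l' : ℕ) (cX : Fin k' → ℕ) (cY : Fin l' → ℕ), k' ≤ k ∧ l' ≤ l ∧
      ∀ row col : Fin n → ℕ, (∀ j, col j < lam (row j)) → Injective (fun j => (row j, col j)) →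
        ∃ (Xs : Fin k' → Finset (Fin n)) (Ys : Fin l' → Finset (Fin n)),
          (∀ i, #(Xs i) = cX i) ∧ (∀ i, #(Ys i) = cY i) ∧ IsRowColPartition row col Xs Ys := by
  by_cases hzero : lam n = 0
  · refine ⟨k, l, fun i => lam i, fun c => #{r ∈ range n | k ≤ r ∧ c < lam r}, le_rfl, le_rfl,
      fun row col hcol hinj => ⟨_, _, fun i => ?_, fun c => ?_,
        isRowColPartition_rowFiber fun j hj => (hcol j).trans_le ((hpart hj).trans hhook)⟩⟩
    · exact card_rowFiber_of_apply_eq_zero hpart hsum hzero hcol hinj i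
    · exact card_colFiber_of_apply_eq_zero hpart hsum hzero hcol hinj k c
  -- Here `lam = 1` on `[0, n]`: every tableau is a single column, with arbitrary distinct row
  -- labels, so the blocks are singletons if `n ≤ k` and the whole column otherwise.
  by_cases hnk : n ≤ k
  · exact ⟨n, 0, fun _ => 1, Fin.elim0, hnk, Nat.zero_le l, fun row col _ _ =>
      ⟨_, _, fun i => card_singleton i, fun i => i.elim0, isRowColPartition_singleton row col⟩⟩
  · have hl : 1 ≤ l := by
      have := hpart (le_of_not_ge hnk)
      omega
    exact ⟨0, 1, Fin.elim0, fun _ => n, Nat.zero_le k, hl, fun row col hcol _ =>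
      ⟨_, _, fun i => i.elim0, fun _ => by simp, isRowColPartition_univ fun j j' => by
        rw [col_eq_zero_of_apply_ne_zero hpart hsum hzero hcol j,
          col_eq_zero_of_apply_ne_zero hpart hsum hzero hcol j']⟩⟩

end Partition

end HookGenerator

/-- let `λ ⊢ n` lie in the hook `H(k,l)` (`λ_{k+1} ≤ l`).  There are
`k' ≤ k`, `l' ≤ l` and cardinalities (depending only on `λ`) such that for every
Young tableau `T_λ` of shape `λ` there are a decomposition of `{1,…,n}` into disjoint
sets `X₁,…,X_{k'},Y₁,…,Y_{l'}` of these cardinalities and an element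
`u·e_{T_λ} ∈ F[S_n]·e_{T_λ}` which is symmetric in each `X_i`, alternating in each
`Y_j`, and generates the same left ideal as `e_{T_λ}`. -/
theorem stmt19 (n k l : ℕ) (lam : ℕ → ℕ) (hpart : Antitone lam)
    (hsum : ∑ i ∈ Finset.range n, lam i = n) (hhook : lam k ≤ l) :
    ∃ (k' l' : ℕ) (cX : Fin k' → ℕ) (cY : Fin l' → ℕ), k' ≤ k ∧ l' ≤ l ∧
      ∀ row col : Fin n → ℕ, (∀ j : Fin n, col j < lam (row j)) →
        (Function.Injective fun j : Fin n => (row j, col j)) →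
        ∃ (Xs : Fin k' → Finset (Fin n)) (Ys : Fin l' → Finset (Fin n))
          (u : MonoidAlgebra F (Equiv.Perm (Fin n))),
          (∀ i, (Xs i).card = cX i) ∧ (∀ i, (Ys i).card = cY i) ∧
          (∀ j : Fin n, ∃! s : Fin k' ⊕ Fin l', j ∈ Sum.elim Xs Ys s) ∧
          (∀ (i : Fin k') (σ : Equiv.Perm (Fin n)),
            (∀ j : Fin n, j ∉ Xs i → σ j = j) →
            MonoidAlgebra.single σ (1 : F) * (u * youngSym F row col) =
              u * youngSym F row col) ∧
          (∀ (i : Fin l') (σ : Equiv.Perm (Fin n)),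
            (∀ j : Fin n, j ∉ Ys i → σ j = j) →
            MonoidAlgebra.single σ (1 : F) * (u * youngSym F row col) =
              (Equiv.Perm.sign σ : ℤ) • (u * youngSym F row col)) ∧
          (Set.range (fun y : MonoidAlgebra F (Equiv.Perm (Fin n)) =>
              y * (u * youngSym F row col)) =
            Set.range (fun y : MonoidAlgebra F (Equiv.Perm (Fin n)) =>
              y * youngSym F row col)) := by
  obtain ⟨k', l', cX, cY, hk', hl', hdecomp⟩ := exists_isRowColPartition hpart hsum hhook
  refine ⟨k', l', cX, cY, hk', hl', fun row col hcol hinj => ?_⟩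
  obtain ⟨Xs, Ys, hcardX, hcardY, hP⟩ := hdecomp row col hcol hinj
  obtain ⟨u, hsym, halt, hgen⟩ := exists_symmetric_alternating_generator F hinj
    (isLeftJustified_of_shape hpart hsum hcol hinj) hP
  exact ⟨Xs, Ys, u, hcardX, hcardY, hP.existsUnique, hsym, halt, hgen⟩
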